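/- If HA + Σ_k-LEM proves a formula φ, then HA^* + Σ_k-LEM proves the Friedman A-translation φ^*. -/

import Mathlib

namespace SemiClassicalArith

/-- Terms of arithmetic: variables (de Bruijn indices) and function symbols
(one symbol of each arity for every code, covering all primitive recursive functions). -/
inductive Term : Type
  | var : ℕ → Term
  | func : (code : ℕ) → (arity : ℕ) → (Fin arity → Term) → Term

namespace Term

/-- Shift all variables `≥ d` up by one. -/
def lift (d : ℕ) : Term → Term
  | var n => if n < d then var n else var (n + 1)
  | func c a ts => func c a fun i => (ts i).lift d

/-- Binder-removing substitution of `s` for variable `k`. -/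
def subst (k : ℕ) (s : Term) : Term → Term
  | var n => if n < k then var n else if n = k then s else var (n - 1)
  | func c a ts => func c a fun i => Term.subst k s (ts i)

/-- In-place replacement of variable `k` by `s` (no shifting of other variables). -/
def repl (k : ℕ) (s : Term) : Term → Term
  | var n => if n = k then s else var n
  | func c a ts => func c a fun i => Term.repl k s (ts i)

/-- Free variables of a term. -/
def fv : Term → Finset ℕ
  | var n => {n}
  | func _ _ ts => Finset.univ.sup fun i => (ts i).fv

/-- The constant zero (function symbol of arity 0, code 0). -/
def zero : Term := func 0 0 (fun i => i.elim0)

/-- Successor (function symbol of arity 1, code 1). -/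
def succ (t : Term) : Term := func 1 1 (fun _ => t)

end Term

/-- Formulas of arithmetic in the language with an extra nullary predicate
symbol `$` (`dollar`), used as a place holder. Quantifiers use de Bruijn indices. -/
inductive Formula : Type
  | falsum : Formula
  | dollar : Formula
  | eq : Term → Term → Formula
  | and : Formula → Formula → Formula
  | or : Formula → Formula → Formula
  | imp : Formula → Formula → Formula
  | all : Formula → Formula
  | ex : Formula → Formula

namespace Formula

def neg (φ : Formula) : Formula := φ.imp falsum

def iff (φ ψ : Formula) : Formula := (φ.imp ψ).and (ψ.imp φ)

/-- `¬_$ φ`, i.e. `φ → $`. -/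
def negD (φ : Formula) : Formula := φ.imp dollar

def lift (d : ℕ) : Formula → Formula
  | falsum => falsum
  | dollar => dollar
  | eq t u => eq (t.lift d) (u.lift d)
  | and φ ψ => and (φ.lift d) (ψ.lift d)
  | or φ ψ => or (φ.lift d) (ψ.lift d)
  | imp φ ψ => imp (φ.lift d) (ψ.lift d)
  | all φ => all (φ.lift (d + 1))
  | ex φ => ex (φ.lift (d + 1))

/-- Binder-removing substitution of term `s` for variable `k`. -/
def subst (k : ℕ) (s : Term) : Formula → Formula
  | falsum => falsum
  | dollar => dollar
  | eq t u => eq (Term.subst k s t) (Term.subst k s u)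
  | and φ ψ => and (Formula.subst k s φ) (Formula.subst k s ψ)
  | or φ ψ => or (Formula.subst k s φ) (Formula.subst k s ψ)
  | imp φ ψ => imp (Formula.subst k s φ) (Formula.subst k s ψ)
  | all φ => all (Formula.subst (k + 1) (s.lift 0) φ)
  | ex φ => ex (Formula.subst (k + 1) (s.lift 0) φ)

/-- In-place replacement of variable `k` by term `s`. -/
def repl (k : ℕ) (s : Term) : Formula → Formula
  | falsum => falsum
  | dollar => dollar
  | eq t u => eq (Term.repl k s t) (Term.repl k s u)
  | and φ ψ => and (Formula.repl k s φ) (Formula.repl k s ψ)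
  | or φ ψ => or (Formula.repl k s φ) (Formula.repl k s ψ)
  | imp φ ψ => imp (Formula.repl k s φ) (Formula.repl k s ψ)
  | all φ => all (Formula.repl (k + 1) (s.lift 0) φ)
  | ex φ => ex (Formula.repl (k + 1) (s.lift 0) φ)

/-- Free variables of a formula. -/
def fv : Formula → Finset ℕ
  | falsum => ∅
  | dollar => ∅
  | eq t u => t.fv ∪ u.fv
  | and φ ψ => φ.fv ∪ ψ.fv
  | or φ ψ => φ.fv ∪ ψ.fv
  | imp φ ψ => φ.fv ∪ ψ.fv
  | all φ => (φ.fv.erase 0).image (· - 1)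
  | ex φ => (φ.fv.erase 0).image (· - 1)

/-- A sentence is a formula with no free variables. -/
def sentence (φ : Formula) : Prop := φ.fv = ∅

/-- The formula is in the language of `HA` (the placeholder `$` does not occur). -/
def noDollar : Formula → Prop
  | falsum => True
  | dollar => False
  | eq _ _ => True
  | and φ ψ => φ.noDollar ∧ ψ.noDollar
  | or φ ψ => φ.noDollar ∧ ψ.noDollar
  | imp φ ψ => φ.noDollar ∧ ψ.noDollar
  | all φ => φ.noDollar
  | ex φ => φ.noDollar

/-- Quantifier-free formula of `HA`. -/
def isQF : Formula → Prop
  | falsum => True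
  | dollar => False
  | eq _ _ => True
  | and φ ψ => φ.isQF ∧ ψ.isQF
  | or φ ψ => φ.isQF ∧ ψ.isQF
  | imp φ ψ => φ.isQF ∧ ψ.isQF
  | all _ => False
  | ex _ => False

/-- Flip `+`/`-` in an alternation path (`true` = `+`, `false` = `-`). -/
def pflip (s : List Bool) : List Bool := s.map (!·)

/-- The set of alternation paths of a formula (Akama–Berardi–Hayashi–Kohlenbach). -/
def alt : Formula → Finset (List Bool)
  | falsum => {([] : List Bool)}
  | dollar => {([] : List Bool)}
  | eq _ _ => {([] : List Bool)}
  | and φ ψ => φ.alt ∪ ψ.alt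
  | or φ ψ => φ.alt ∪ ψ.alt
  | imp φ ψ => φ.alt.image pflip ∪ ψ.alt
  | all φ => φ.alt.image (fun s => if s.head? = some false then s else false :: s)
  | ex φ => φ.alt.image (fun s => if s.head? = some true then s else true :: s)

/-- The degree of a formula: the maximal length of its alternation paths. -/
def degree (φ : Formula) : ℕ := φ.alt.sup List.length

/-- The class `U_k` (for `k ≥ 1`: degree `k` and all maximal paths begin with `-`;
`U_0` is the class of degree-`0` formulas). -/
def inU (k : ℕ) (φ : Formula) : Prop :=
  φ.degree = k ∧ ∀ s ∈ φ.alt, s.length = k → k = 0 ∨ s.head? = some false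

/-- The class `E_k` (for `k ≥ 1`: degree `k` and all maximal paths begin with `+`;
`E_0` is the class of degree-`0` formulas). -/
def inE (k : ℕ) (φ : Formula) : Prop :=
  φ.degree = k ∧ ∀ s ∈ φ.alt, s.length = k → k = 0 ∨ s.head? = some true

/-- The dual of a prenex formula: swap quantifiers and negate the matrix. -/
def dual : Formula → Formula
  | all φ => ex φ.dual
  | ex φ => all φ.dual
  | φ => φ.neg

/-- The `$`-translation (Ishihara's generalized negative translation). -/
def dollarTr : Formula → Formula
  | falsum => dollar
  | dollar => dollar
  | eq t u => (eq t u).negD.negD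
  | and φ ψ => and φ.dollarTr ψ.dollarTr
  | or φ ψ => (or φ.dollarTr ψ.dollarTr).negD.negD
  | imp φ ψ => imp φ.dollarTr ψ.dollarTr
  | all φ => all φ.dollarTr
  | ex φ => (ex φ.dollarTr).negD.negD

/-- The Friedman A-translation: replace every prime formula `P` (including `⊥`)
by `P ∨ *` (here `*` is the placeholder `dollar`). -/
def aTr : Formula → Formula
  | falsum => or falsum dollar
  | dollar => dollar
  | eq t u => or (eq t u) dollar
  | and φ ψ => and φ.aTr ψ.aTr
  | or φ ψ => or φ.aTr ψ.aTr
  | imp φ ψ => imp φ.aTr ψ.aTr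
  | all φ => all φ.aTr
  | ex φ => ex φ.aTr

/-- Prefix `n` universal quantifiers. -/
def allN : Formula → ℕ → Formula
  | φ, 0 => φ
  | φ, n + 1 => Formula.allN φ.all n

/-- The universal closure of a formula. -/
def univClosure (φ : Formula) : Formula := φ.allN (φ.fv.sup Nat.succ)

end Formula

mutual
  /-- The class `Σ_k` of prenex formulas. -/
  inductive IsSigma : ℕ → Formula → Prop
    | qf {φ : Formula} : φ.isQF → IsSigma 0 φ
    | ofPi {k : ℕ} {φ : Formula} : IsPi k φ → IsSigma (k + 1) φ
    | ex {k : ℕ} {φ : Formula} : IsSigma (k + 1) φ → IsSigma (k + 1) φ.ex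
  /-- The class `Π_k` of prenex formulas. -/
  inductive IsPi : ℕ → Formula → Prop
    | qf {φ : Formula} : φ.isQF → IsPi 0 φ
    | ofSigma {k : ℕ} {φ : Formula} : IsSigma k φ → IsPi (k + 1) φ
    | all {k : ℕ} {φ : Formula} : IsPi (k + 1) φ → IsPi (k + 1) φ.all
end

/-- Axioms of Heyting arithmetic `HA` (Hilbert style intuitionistic predicate logic
with equality, plus arithmetical axioms and the induction scheme). -/
inductive HAAx : Formula → Prop
  | axK (φ ψ : Formula) : HAAx (φ.imp (ψ.imp φ))
  | axS (φ ψ χ : Formula) : HAAx ((φ.imp (ψ.imp χ)).imp ((φ.imp ψ).imp (φ.imp χ)))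
  | andI (φ ψ : Formula) : HAAx (φ.imp (ψ.imp (φ.and ψ)))
  | andE1 (φ ψ : Formula) : HAAx ((φ.and ψ).imp φ)
  | andE2 (φ ψ : Formula) : HAAx ((φ.and ψ).imp ψ)
  | orI1 (φ ψ : Formula) : HAAx (φ.imp (φ.or ψ))
  | orI2 (φ ψ : Formula) : HAAx (ψ.imp (φ.or ψ))
  | orE (φ ψ χ : Formula) : HAAx ((φ.imp χ).imp ((ψ.imp χ).imp ((φ.or ψ).imp χ)))
  | efq (φ : Formula) : HAAx (Formula.falsum.imp φ)
  | allE (φ : Formula) (t : Term) : HAAx (φ.all.imp (φ.subst 0 t))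
  | exI (φ : Formula) (t : Term) : HAAx ((φ.subst 0 t).imp φ.ex)
  | allK (φ ψ : Formula) : HAAx ((φ.imp ψ).all.imp (φ.all.imp ψ.all))
  | allVac (φ : Formula) : HAAx (φ.imp (φ.lift 0).all)
  | exE (φ ψ : Formula) : HAAx ((φ.imp (ψ.lift 0)).all.imp (φ.ex.imp ψ))
  | eqRefl (t : Term) : HAAx (Formula.eq t t)
  | eqSubst (t u : Term) (φ : Formula) : HAAx ((Formula.eq t u).imp ((φ.subst 0 t).imp (φ.subst 0 u)))
  | succNeZero (t : Term) : HAAx (Formula.neg (Formula.eq (Term.succ t) Term.zero))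
  | succInj (t u : Term) : HAAx ((Formula.eq (Term.succ t) (Term.succ u)).imp (Formula.eq t u))
  | ind (φ : Formula) : HAAx ((φ.subst 0 Term.zero).imp
      ((((φ.imp (φ.repl 0 (Term.succ (Term.var 0))))).all).imp φ.all))
  | atomDec (t u : Term) : HAAx ((Formula.eq t u).or (Formula.eq t u).neg)

/-- Provability from `HA` (in the language possibly containing `$`)
together with the extra axioms `T`. -/
inductive Proves (T : Set Formula) : Formula → Prop
  | ax {φ : Formula} : φ ∈ T → Proves T φ
  | ha {φ : Formula} : HAAx φ → Proves T φ
  | mp {φ ψ : Formula} : Proves T (φ.imp ψ) → Proves T φ → Proves T ψ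
  | gen {φ : Formula} : Proves T φ → Proves T φ.all

/-- The scheme `Σ_k-LEM`. -/
def sigLEM (k : ℕ) : Set Formula := {ψ | ∃ φ : Formula, IsSigma k φ ∧ ψ = φ.or φ.neg}

/-- The full law of excluded middle for `HA`-formulas; `Proves lemSet` is `PA`-provability. -/
def lemSet : Set Formula := {ψ | ∃ φ : Formula, φ.noDollar ∧ ψ = φ.or φ.neg}

/-- The scheme `F_k-LEM`: excluded middle for `HA`-formulas of degree at most `k`. -/
def fLEM (k : ℕ) : Set Formula :=
  {ψ | ∃ φ : Formula, φ.noDollar ∧ φ.degree ≤ k ∧ ψ = φ.or φ.neg}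

/-- `T` is (the set of extra axioms of) a semi-classical arithmetic:
`HA ⊆ HA + T ⊆ PA`, i.e. all axioms are `HA`-formulas provable in `PA`. -/
def IsSemiClassical (T : Set Formula) : Prop :=
  ∀ φ ∈ T, φ.noDollar ∧ Proves lemSet φ

mutual
  /-- The class `ℛ_{k+1}` (index `k` denotes `ℛ_{k+1}`). -/
  inductive Rcl : ℕ → Formula → Prop
    | base {k : ℕ} {φ : Formula} : φ.degree ≤ k → φ.noDollar → Rcl k φ
    | and {k : ℕ} {φ ψ : Formula} : Rcl k φ → Rcl k ψ → Rcl k (φ.and ψ)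
    | or {k : ℕ} {φ ψ : Formula} : Rcl k φ → Rcl k ψ → Rcl k (φ.or ψ)
    | all {k : ℕ} {φ : Formula} : Rcl k φ → Rcl k φ.all
    | imp {k : ℕ} {φ ψ : Formula} : Jcl k φ → Rcl k ψ → Rcl k (φ.imp ψ)
  /-- The class `𝒥_{k+1}` (index `k` denotes `𝒥_{k+1}`). -/
  inductive Jcl : ℕ → Formula → Prop
    | base {k : ℕ} {φ : Formula} : φ.degree ≤ k → φ.noDollar → Jcl k φ
    | and {k : ℕ} {φ ψ : Formula} : Jcl k φ → Jcl k ψ → Jcl k (φ.and ψ)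
    | or {k : ℕ} {φ ψ : Formula} : Jcl k φ → Jcl k ψ → Jcl k (φ.or ψ)
    | ex {k : ℕ} {φ : Formula} : Jcl k φ → Jcl k φ.ex
    | imp {k : ℕ} {φ ψ : Formula} : Rcl k φ → Jcl k ψ → Jcl k (φ.imp ψ)
end

/-- The class `𝒬_{k+1}` (index `k` denotes `𝒬_{k+1}`): generated from prime formulas by
`∧, ∨, ∀, ∃` and implications `J → Q` with `J ∈ 𝒥_{k+1}`. -/
inductive Qcl : ℕ → Formula → Prop
  | falsum {k : ℕ} : Qcl k Formula.falsum
  | eq {k : ℕ} {t u : Term} : Qcl k (Formula.eq t u)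
  | and {k : ℕ} {φ ψ : Formula} : Qcl k φ → Qcl k ψ → Qcl k (φ.and ψ)
  | or {k : ℕ} {φ ψ : Formula} : Qcl k φ → Qcl k ψ → Qcl k (φ.or ψ)
  | all {k : ℕ} {φ : Formula} : Qcl k φ → Qcl k φ.all
  | ex {k : ℕ} {φ : Formula} : Qcl k φ → Qcl k φ.ex
  | imp {k : ℕ} {φ ψ : Formula} : Jcl k φ → Qcl k ψ → Qcl k (φ.imp ψ)

/-- The class `𝒱_{k+1}` (index `k` denotes `𝒱_{k+1}`): generated from `𝒥_{k+1}` by `∧, ∀`. -/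
inductive Vcl : ℕ → Formula → Prop
  | ofJ {k : ℕ} {φ : Formula} : Jcl k φ → Vcl k φ
  | and {k : ℕ} {φ ψ : Formula} : Vcl k φ → Vcl k ψ → Vcl k (φ.and ψ)
  | all {k : ℕ} {φ : Formula} : Vcl k φ → Vcl k φ.all

/-- The class `EΠ_k`: generated from `Π_k` formulas by `∨` and `∀`. -/
inductive EPi (k : ℕ) : Formula → Prop
  | ofPi {φ : Formula} : IsPi k φ → EPi k φ
  | or {φ ψ : Formula} : EPi k φ → EPi k ψ → EPi k (φ.or ψ)
  | all {φ : Formula} : EPi k φ → EPi k φ.all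

/-- The class `EΣ_{k+1}` (index `k` denotes `EΣ_{k+1}`): existential quantifications
of `EΠ_k` formulas. -/
inductive ESig (k : ℕ) : Formula → Prop
  | ofEPi {φ : Formula} : EPi k φ → ESig k φ
  | ex {φ : Formula} : ESig k φ → ESig k φ.ex

/-- The scheme `Γ-DNEC`: universal closure of `¬¬φ` implies universal closure of `φ`. -/
def dnecSet (Γ : Set Formula) : Set Formula :=
  {ψ | ∃ φ ∈ Γ, ψ = (φ.neg.neg.univClosure).imp φ.univClosure}

/-- The scheme `Γ-DNSC`: universal closure of `¬¬φ` implies `¬¬` of the universal closure. -/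
def dnscSet (Γ : Set Formula) : Set Formula :=
  {ψ | ∃ φ ∈ Γ, ψ = (φ.neg.neg.univClosure).imp φ.univClosure.neg.neg}

/-- Double-negation elimination for sentences in `Γ`. -/
def dneSentSet (Γ : Set Formula) : Set Formula :=
  {ψ | ∃ φ ∈ Γ, φ.sentence ∧ ψ = φ.neg.neg.imp φ}


/-!
The A-translation commutes with lifting and substitution, so it sends every axiom of `HA` to a
theorem of `HA^*`, and it commutes with modus ponens and generalisation. The real work is the
instances `φ ∨ ¬φ` of `Σ_k-LEM`. For prenex `φ ∈ Σ_k ∪ Π_k` one shows `φ → φ^*` and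
`φ^* → φ ∨ *` in `HA^* + Σ_k-LEM` by induction on the quantifier prefix; at a universal
quantifier `Σ_k-LEM`, in the form `∀x ψ ∨ ∃x ψᵈ` with `ψᵈ` the prenex dual of `ψ`, decides whether
`*` has to be produced. With both implications, `(φ ∨ ¬φ)^* = φ^* ∨ (φ^* → ⊥ ∨ *)` follows by
cases on `φ ∨ ¬φ`.
-/

namespace Term

theorem subst_var_lift_succ (k : ℕ) (t : Term) : subst k (var k) (t.lift (k + 1)) = t := by
  induction t with
  | var n =>
    unfold lift
    split_ifs <;> simp only [subst] <;> split_ifs <;> congr 1 <;> omega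
  | func c a ts ih => simp only [lift, subst, ih]

end Term

namespace Formula

theorem subst_var_lift_succ (φ : Formula) (k : ℕ) : (φ.lift (k + 1)).subst k (.var k) = φ := by
  induction φ generalizing k with
  | all φ ih | ex φ ih => simp only [lift, subst, Term.lift, if_neg (Nat.not_lt_zero _), ih]
  | _ => simp_all [lift, subst, Term.subst_var_lift_succ]

theorem aTr_lift (φ : Formula) (d : ℕ) : (φ.lift d).aTr = φ.aTr.lift d := by
  induction φ generalizing d <;> simp_all [lift, aTr]

theorem aTr_subst (φ : Formula) (k : ℕ) (s : Term) : (φ.subst k s).aTr = φ.aTr.subst k s := by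
  induction φ generalizing k s <;> simp_all [subst, aTr]

theorem aTr_repl (φ : Formula) (k : ℕ) (s : Term) : (φ.repl k s).aTr = φ.aTr.repl k s := by
  induction φ generalizing k s <;> simp_all [repl, aTr]

theorem dual_of_isQF {φ : Formula} (h : φ.isQF) : φ.dual = φ.neg := by
  cases φ <;> first | rfl | exact h.elim

theorem isQF.neg {φ : Formula} (h : φ.isQF) : φ.neg.isQF := ⟨h, trivial⟩

/-- `imps [ψ₁, …, ψₙ] φ` is `ψ₁ → ⋯ → ψₙ → φ`; derivations of it replace natural-deduction
derivations of `φ` from the hypotheses `ψᵢ`. -/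
def imps : List Formula → Formula → Formula
  | [], φ => φ
  | ψ :: Γ, φ => ψ.imp (imps Γ φ)

end Formula

open Formula

namespace Proves

variable {T : Set Formula} {φ ψ χ : Formula}

theorem mono {T' : Set Formula} (hT : T ⊆ T') (h : Proves T φ) : Proves T' φ := by
  induction h with
  | ax h => exact .ax (hT h)
  | ha h => exact .ha h
  | mp _ _ ih₁ ih₂ => exact .mp ih₁ ih₂
  | gen _ ih => exact .gen ih

theorem const (ψ : Formula) (h : Proves T φ) : Proves T (ψ.imp φ) := .mp (.ha (.axK φ ψ)) h

theorem imp_mp (h : Proves T (φ.imp (ψ.imp χ))) (g : Proves T (φ.imp ψ)) :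
    Proves T (φ.imp χ) :=
  .mp (.mp (.ha (.axS φ ψ χ)) h) g

theorem imp_self (φ : Formula) : Proves T (φ.imp φ) :=
  imp_mp (.ha (.axK φ (φ.imp φ))) (.ha (.axK φ φ))

theorem imp_trans (h : Proves T (φ.imp ψ)) (g : Proves T (ψ.imp χ)) : Proves T (φ.imp χ) :=
  imp_mp (const φ g) h

theorem or_imp (h₁ : Proves T (φ.imp χ)) (h₂ : Proves T (ψ.imp χ)) :
    Proves T ((φ.or ψ).imp χ) :=
  .mp (.mp (.ha (.orE φ ψ χ)) h₁) h₂

theorem subst_zero (t : Term) (h : Proves T φ) : Proves T (φ.subst 0 t) :=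
  .mp (.ha (.allE φ t)) (.gen h)

theorem all_imp_all (h : Proves T (φ.imp ψ)) : Proves T (φ.all.imp ψ.all) :=
  .mp (.ha (.allK φ ψ)) (.gen h)

theorem imp_all_of_lift_imp (h : Proves T ((χ.lift 0).imp ψ)) : Proves T (χ.imp ψ.all) :=
  imp_trans (.ha (.allVac χ)) (all_imp_all h)

theorem ex_imp_of_imp_lift (h : Proves T (φ.imp (ψ.lift 0))) : Proves T (φ.ex.imp ψ) :=
  .mp (.ha (.exE φ ψ)) (.gen h)

/-- `(φ.lift 1).ex` binds the variable `0` of `φ` and leaves its other variables in place. -/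
theorem imp_ex_lift_one (φ : Formula) : Proves T (φ.imp (φ.lift 1).ex) := by
  simpa only [subst_var_lift_succ] using Proves.ha (T := T) (.exI (φ.lift 1) (.var 0))

theorem all_lift_one_imp (φ : Formula) : Proves T ((φ.lift 1).all.imp φ) := by
  simpa only [subst_var_lift_succ] using Proves.ha (T := T) (.allE (φ.lift 1) (.var 0))

theorem imps_of (Γ : List Formula) (h : Proves T φ) : Proves T (imps Γ φ) := by
  induction Γ with
  | nil => exact h
  | cons ψ Γ ih => exact const ψ ih

theorem imps_imp_distrib (Γ : List Formula) (φ ψ : Formula) :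
    Proves T ((imps Γ (φ.imp ψ)).imp ((imps Γ φ).imp (imps Γ ψ))) := by
  induction Γ with
  | nil => exact imp_self _
  | cons χ Γ ih =>
    exact imp_trans (.mp (.ha (.axS χ _ _)) (const χ ih)) (.ha (.axS χ _ _))

theorem imps_mp {Γ : List Formula} (h : Proves T (imps Γ (φ.imp ψ))) (g : Proves T (imps Γ φ)) :
    Proves T (imps Γ ψ) :=
  .mp (.mp (imps_imp_distrib Γ φ ψ) h) g

theorem imps_map {Γ : List Formula} (h : Proves T (φ.imp ψ)) (g : Proves T (imps Γ φ)) :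
    Proves T (imps Γ ψ) :=
  imps_mp (imps_of Γ h) g

theorem imps_cons_self (Γ : List Formula) (φ : Formula) : Proves T (imps (φ :: Γ) φ) := by
  induction Γ with
  | nil => exact imp_self φ
  | cons χ Γ ih => exact imp_trans ih (.ha (.axK _ χ))

theorem imps_hyp {Γ : List Formula} (h : φ ∈ Γ) : Proves T (imps Γ φ) := by
  induction Γ with
  | nil => cases h
  | cons ψ Γ ih =>
    rcases List.mem_cons.mp h with rfl | h
    · exact imps_cons_self Γ φ
    · exact const ψ (ih h)

theorem imps_orE {Γ : List Formula} (hd : Proves T (imps Γ (φ.or ψ)))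
    (h₁ : Proves T (imps Γ (φ.imp χ))) (h₂ : Proves T (imps Γ (ψ.imp χ))) :
    Proves T (imps Γ χ) :=
  imps_mp (imps_mp (imps_map (.ha (.orE φ ψ χ)) h₁) h₂) hd

theorem imps_append_singleton (Γ : List Formula) (φ ψ : Formula) :
    imps (Γ ++ [φ]) ψ = imps Γ (φ.imp ψ) := by
  induction Γ with
  | nil => rfl
  | cons χ Γ ih => simp only [List.cons_append, imps, ih]

theorem imps_intro {Γ : List Formula} (h : Proves T (imps (Γ ++ [φ]) ψ)) :
    Proves T (imps Γ (φ.imp ψ)) := by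
  rwa [← imps_append_singleton]

theorem imp_swap (h : Proves T (φ.imp (ψ.imp χ))) :
    Proves T (ψ.imp (φ.imp χ)) :=
  show Proves T (imps [ψ, φ] χ) from
    imps_mp (imps_map h (imps_hyp (by simp))) (imps_hyp (by simp))

theorem neg_imp_imp (φ ψ : Formula) : Proves T (φ.neg.imp (φ.imp ψ)) :=
  .mp (.ha (.axS _ _ _)) (const φ (.ha (.efq ψ)))

theorem dollar_imp_aTr (φ : Formula) : Proves T (dollar.imp φ.aTr) := by
  induction φ with
  | falsum | eq => exact .ha (.orI2 _ _)
  | dollar => exact imp_self _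
  | and φ ψ ihφ ihψ => exact imp_mp (imp_trans ihφ (.ha (.andI _ _))) ihψ
  | or φ ψ ihφ => exact imp_trans ihφ (.ha (.orI1 _ _))
  | imp φ ψ _ ihψ => exact imp_trans ihψ (.ha (.axK _ _))
  | all φ ih => exact imp_all_of_lift_imp (χ := dollar) ih
  | ex φ ih => exact imp_trans (subst_zero .zero ih) (.ha (.exI _ .zero))

theorem or_neg_of_isQF (h : φ.isQF) : Proves T (φ.or φ.neg) := by
  induction φ with
  | falsum => exact .mp (.ha (.orI2 _ _)) (imp_self _)
  | eq t u => exact .ha (.atomDec t u)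
  | dollar | all | ex => exact h.elim
  | and φ ψ ihφ ihψ =>
    refine imps_orE (Γ := []) (ihφ h.1) (imps_intro ?_) (imps_intro ?_)
    · refine imps_orE (imps_of _ (ihψ h.2)) (imps_intro ?_) (imps_intro ?_)
      · exact imps_map (.ha (.orI1 _ _))
          (imps_mp (imps_map (.ha (.andI φ ψ)) (imps_hyp (by simp))) (imps_hyp (by simp)))
      · refine imps_map (.ha (.orI2 _ _)) (imps_intro ?_)
        exact imps_mp (imps_hyp (φ := ψ.neg) (by simp))
          (imps_map (.ha (.andE2 φ ψ)) (imps_hyp (by simp)))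
    · refine imps_map (.ha (.orI2 _ _)) (imps_intro ?_)
      exact imps_mp (imps_hyp (φ := φ.neg) (by simp))
        (imps_map (.ha (.andE1 φ ψ)) (imps_hyp (by simp)))
  | or φ ψ ihφ ihψ =>
    refine imps_orE (Γ := []) (ihφ h.1) (imp_trans (.ha (.orI1 φ ψ)) (.ha (.orI1 _ _)))
      (imps_intro ?_)
    refine imps_orE (imps_of _ (ihψ h.2))
      (imps_of _ (imp_trans (.ha (.orI2 φ ψ)) (.ha (.orI1 _ _)))) (imps_intro ?_)
    exact imps_map (.ha (.orI2 _ _))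
      (imps_mp (imps_map (.ha (.orE φ ψ .falsum)) (imps_hyp (φ := φ.neg) (by simp)))
        (imps_hyp (φ := ψ.neg) (by simp)))
  | imp φ ψ ihφ ihψ =>
    refine imps_orE (Γ := []) (ihψ h.2) (imp_trans (.ha (.axK ψ φ)) (.ha (.orI1 _ _)))
      (imps_intro ?_)
    refine imps_orE (imps_of _ (ihφ h.1)) (imps_intro ?_)
      (imps_of _ (imp_trans (neg_imp_imp φ ψ) (.ha (.orI1 _ _))))
    refine imps_map (.ha (.orI2 _ _)) (imps_intro ?_)
    exact imps_mp (imps_hyp (φ := ψ.neg) (by simp))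
      (imps_mp (imps_hyp (φ := φ.imp ψ) (by simp)) (imps_hyp (by simp)))

end Proves

open Proves

/-- `φ^* ↔ φ ∨ *`, with `φ ∨ * → φ^*` weakened to `φ → φ^*`: its other half `* → φ^*` holds for
every formula (`Proves.dollar_imp_aTr`). -/
def ATrIff (T : Set Formula) (φ : Formula) : Prop :=
  Proves T (φ.imp φ.aTr) ∧ Proves T (φ.aTr.imp (φ.or dollar))

namespace ATrIff

variable {T : Set Formula} {φ : Formula}

theorem of_isQF (h : φ.isQF) : ATrIff T φ := by
  induction φ with
  | falsum | eq => exact ⟨.ha (.orI1 _ _), imp_self _⟩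
  | dollar | all | ex => exact h.elim
  | and φ ψ ihφ ihψ =>
    obtain ⟨toφ, ofφ⟩ := ihφ h.1
    obtain ⟨toψ, ofψ⟩ := ihψ h.2
    refine ⟨imp_mp (imp_trans (imp_trans (.ha (.andE1 φ ψ)) toφ) (.ha (.andI _ _)))
      (imp_trans (.ha (.andE2 φ ψ)) toψ), ?_⟩
    show Proves T (imps [φ.aTr.and ψ.aTr] ((φ.and ψ).or dollar))
    refine imps_orE (imps_map ofφ (imps_map (.ha (.andE1 _ ψ.aTr)) (imps_hyp (by simp))))
      (imps_intro ?_) (imps_of _ (.ha (.orI2 _ _)))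
    refine imps_orE (imps_map ofψ (imps_map (.ha (.andE2 φ.aTr _)) (imps_hyp (by simp))))
      (imps_intro ?_) (imps_of _ (.ha (.orI2 _ _)))
    exact imps_map (.ha (.orI1 _ _))
      (imps_mp (imps_map (.ha (.andI φ ψ)) (imps_hyp (by simp))) (imps_hyp (by simp)))
  | or φ ψ ihφ ihψ =>
    obtain ⟨toφ, ofφ⟩ := ihφ h.1
    obtain ⟨toψ, ofψ⟩ := ihψ h.2
    exact ⟨or_imp (imp_trans toφ (.ha (.orI1 _ _))) (imp_trans toψ (.ha (.orI2 _ _))),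
      or_imp (imp_trans ofφ (or_imp (imp_trans (.ha (.orI1 φ ψ)) (.ha (.orI1 _ _)))
          (.ha (.orI2 _ _))))
        (imp_trans ofψ (or_imp (imp_trans (.ha (.orI2 φ ψ)) (.ha (.orI1 _ _)))
          (.ha (.orI2 _ _))))⟩
  | imp φ ψ ihφ ihψ =>
    obtain ⟨toφ, ofφ⟩ := ihφ h.1
    obtain ⟨toψ, ofψ⟩ := ihψ h.2
    constructor
    · show Proves T (imps [φ.imp ψ, φ.aTr] ψ.aTr)
      refine imps_orE (imps_map ofφ (imps_hyp (by simp))) (imps_intro ?_)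
        (imps_of _ (dollar_imp_aTr ψ))
      exact imps_map toψ (imps_mp (imps_hyp (φ := φ.imp ψ) (by simp)) (imps_hyp (by simp)))
    · show Proves T (imps [φ.aTr.imp ψ.aTr] ((φ.imp ψ).or dollar))
      refine imps_orE (imps_of _ (or_neg_of_isQF h.1)) (imps_intro ?_)
        (imps_of _ (imp_trans (neg_imp_imp φ ψ) (.ha (.orI1 _ _))))
      refine imps_orE (imps_map ofψ (imps_mp (imps_hyp (φ := φ.aTr.imp ψ.aTr) (by simp))
        (imps_map toφ (imps_hyp (by simp))))) (imps_intro ?_) (imps_of _ (.ha (.orI2 _ _)))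
      exact imps_map (imp_trans (.ha (.axK ψ φ)) (.ha (.orI1 _ _))) (imps_hyp (by simp))

theorem mono {T' : Set Formula} (hT : T ⊆ T') (h : ATrIff T φ) : ATrIff T' φ :=
  ⟨h.1.mono hT, h.2.mono hT⟩

theorem aTr_or_neg (h : ATrIff T φ) (hem : Proves T (φ.or φ.neg)) :
    Proves T (φ.or φ.neg).aTr := by
  refine imps_orE (Γ := []) hem (imp_trans h.1 (.ha (.orI1 _ _))) ?_
  refine imp_trans ?_ (.ha (.orI2 _ _))
  show Proves T (imps [φ.neg, φ.aTr] (falsum.or dollar))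
  refine imps_orE (imps_map h.2 (imps_hyp (by simp))) (imps_intro ?_)
    (imps_of _ (.ha (.orI2 _ _)))
  exact imps_map (.ha (.orI1 _ _))
    (imps_mp (imps_hyp (φ := φ.neg) (by simp)) (imps_hyp (by simp)))

end ATrIff

namespace Proves

variable {T : Set Formula}

theorem aTr_of_HAAx {φ : Formula} (h : HAAx φ) : Proves T φ.aTr := by
  cases h with
  | axK φ ψ => exact .ha (.axK _ _)
  | axS φ ψ χ => exact .ha (.axS _ _ _)
  | andI φ ψ => exact .ha (.andI _ _)
  | andE1 φ ψ => exact .ha (.andE1 _ _)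
  | andE2 φ ψ => exact .ha (.andE2 _ _)
  | orI1 φ ψ => exact .ha (.orI1 _ _)
  | orI2 φ ψ => exact .ha (.orI2 _ _)
  | orE φ ψ χ => exact .ha (.orE _ _ _)
  | allK φ ψ => exact .ha (.allK _ _)
  | efq φ => exact or_imp (.ha (.efq _)) (dollar_imp_aTr φ)
  | allE φ t => simpa only [aTr, aTr_subst] using .ha (.allE φ.aTr t)
  | exI φ t => simpa only [aTr, aTr_subst] using .ha (.exI φ.aTr t)
  | allVac φ => simpa only [aTr, aTr_lift] using .ha (.allVac φ.aTr)
  | exE φ ψ => simpa only [aTr, aTr_lift] using .ha (.exE φ.aTr ψ.aTr)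
  | ind φ => simpa only [aTr, aTr_subst, aTr_repl] using .ha (.ind φ.aTr)
  | eqRefl t => exact .mp (.ha (.orI1 _ _)) (.ha (.eqRefl t))
  | eqSubst t u φ =>
    have hdollar := dollar_imp_aTr (T := T) (φ.subst 0 u)
    simp only [aTr, aTr_subst] at hdollar ⊢
    exact or_imp (.ha (.eqSubst t u φ.aTr)) (imp_trans hdollar (.ha (.axK _ _)))
  | succNeZero t =>
    exact or_imp (imp_trans (.ha (.succNeZero t)) (.ha (.orI1 _ _))) (.ha (.orI2 _ _))
  | succInj t u => exact or_imp (imp_trans (.ha (.succInj t u)) (.ha (.orI1 _ _))) (.ha (.orI2 _ _))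
  | atomDec t u =>
    exact (ATrIff.of_isQF (φ := .eq t u) trivial).aTr_or_neg (.ha (.atomDec t u))

end Proves

mutual

theorem IsSigma.succ {k : ℕ} {φ : Formula} : IsSigma k φ → IsSigma (k + 1) φ
  | .qf h => .ofPi (.qf h)
  | .ofPi h => .ofPi h.succ
  | .ex h => .ex h.succ

theorem IsPi.succ {k : ℕ} {φ : Formula} : IsPi k φ → IsPi (k + 1) φ
  | .qf h => .ofSigma (.qf h)
  | .ofSigma h => .ofSigma h.succ
  | .all h => .all h.succ

end

theorem sigLEM_subset_succ (k : ℕ) : sigLEM k ⊆ sigLEM (k + 1) := by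
  rintro _ ⟨φ, hφ, rfl⟩
  exact ⟨φ, hφ.succ, rfl⟩

mutual

theorem IsSigma.dual {k : ℕ} {φ : Formula} : IsSigma k φ → IsPi k φ.dual
  | .qf h => dual_of_isQF h ▸ .qf h.neg
  | .ofPi h => .ofSigma h.dual
  | .ex h => .all h.dual

theorem IsPi.dual {k : ℕ} {φ : Formula} : IsPi k φ → IsSigma k φ.dual
  | .qf h => dual_of_isQF h ▸ .qf h.neg
  | .ofSigma h => .ofPi h.dual
  | .all h => .ex h.dual

end

section

variable {T : Set Formula}

mutual

theorem IsSigma.dual_imp_neg {k : ℕ} {φ : Formula} :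
    IsSigma k φ → Proves T (φ.dual.imp φ.neg)
  | .qf h => dual_of_isQF h ▸ imp_self _
  | .ofPi h => h.dual_imp_neg
  | .ex (φ := φ) h => by
    refine imp_swap (ex_imp_of_imp_lift (ψ := φ.dual.all.imp falsum) ?_)
    show Proves T (imps [φ, (φ.dual.lift 1).all] falsum)
    exact imps_mp (imps_map h.dual_imp_neg (imps_map (all_lift_one_imp _) (imps_hyp (by simp))))
      (imps_hyp (by simp))

theorem IsPi.dual_imp_neg {k : ℕ} {φ : Formula} : IsPi k φ → Proves T (φ.dual.imp φ.neg)
  | .qf h => dual_of_isQF h ▸ imp_self _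
  | .ofSigma h => h.dual_imp_neg
  | .all (φ := φ) h => by
    refine ex_imp_of_imp_lift (ψ := φ.all.imp falsum) ?_
    show Proves T (imps [φ.dual, (φ.lift 1).all] falsum)
    exact imps_mp (imps_map h.dual_imp_neg (imps_hyp (by simp)))
      (imps_map (all_lift_one_imp _) (imps_hyp (by simp)))

end

end

mutual

theorem IsSigma.or_dual {k : ℕ} {φ : Formula} : IsSigma k φ → Proves (sigLEM k) (φ.or φ.dual)
  | .qf h => dual_of_isQF h ▸ or_neg_of_isQF h
  | .ofPi h => h.or_dual.mono (sigLEM_subset_succ _)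
  | .ex (φ := φ) h => by
    refine imps_orE (Γ := []) (.ax ⟨φ.ex, .ex h, rfl⟩) (.ha (.orI1 _ _)) ?_
    refine imp_trans (imp_all_of_lift_imp ?_) (.ha (.orI2 _ _))
    show Proves _ (imps [(φ.lift 1).ex.neg] φ.dual)
    refine imps_orE (imps_of _ h.or_dual) (imps_intro ?_) (imps_of _ (imp_self _))
    exact imps_map (.ha (.efq _))
      (imps_mp (imps_hyp (φ := (φ.lift 1).ex.neg) (by simp))
        (imps_map (imp_ex_lift_one φ) (imps_hyp (by simp))))

theorem IsPi.or_dual {k : ℕ} {φ : Formula} : IsPi k φ → Proves (sigLEM k) (φ.or φ.dual)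
  | .qf h => dual_of_isQF h ▸ or_neg_of_isQF h
  | .ofSigma h => h.or_dual.mono (sigLEM_subset_succ _)
  | .all (φ := φ) h => by
    refine imps_orE (Γ := []) (.ax ⟨φ.dual.ex, .ex h.dual, rfl⟩) (.ha (.orI2 _ _)) ?_
    refine imp_trans (imp_all_of_lift_imp ?_) (.ha (.orI1 _ _))
    show Proves _ (imps [(φ.dual.lift 1).ex.neg] φ)
    refine imps_orE (imps_of _ h.or_dual) (imps_of _ (imp_self _)) (imps_intro ?_)
    exact imps_map (.ha (.efq _))
      (imps_mp (imps_hyp (φ := (φ.dual.lift 1).ex.neg) (by simp))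
        (imps_map (imp_ex_lift_one φ.dual) (imps_hyp (by simp))))

end

mutual

theorem IsSigma.aTrIff {k : ℕ} {φ : Formula} : IsSigma k φ → ATrIff (sigLEM k) φ
  | .qf h => .of_isQF h
  | .ofPi h => h.aTrIff.mono (sigLEM_subset_succ _)
  | .ex (φ := φ) h =>
    ⟨ex_imp_of_imp_lift (imp_trans h.aTrIff.1 (imp_ex_lift_one _)),
      ex_imp_of_imp_lift (ψ := φ.ex.or dollar) (imp_trans h.aTrIff.2
        (or_imp (imp_trans (imp_ex_lift_one φ) (.ha (.orI1 _ _))) (.ha (.orI2 _ _))))⟩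

theorem IsPi.aTrIff {k : ℕ} {φ : Formula} : IsPi k φ → ATrIff (sigLEM k) φ
  | .qf h => .of_isQF h
  | .ofSigma h => h.aTrIff.mono (sigLEM_subset_succ _)
  | .all (φ := φ) h => by
    -- if `∃x φᵈ` rather than `∀x φ`, then `φ^*(x) → φ(x) ∨ *` and `φᵈ(x)` refute `φ(x)`
    refine ⟨all_imp_all h.aTrIff.1, imps_orE (Γ := []) (IsPi.all h).or_dual
      (imp_trans (.ha (.orI1 _ dollar)) (.ha (.axK _ _))) (ex_imp_of_imp_lift ?_)⟩
    show Proves _ (imps [φ.dual, (φ.aTr.lift 1).all] ((φ.lift 1).all.or dollar))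
    refine imps_orE (imps_map h.aTrIff.2 (imps_map (all_lift_one_imp _) (imps_hyp (by simp))))
      (imps_intro ?_) (imps_of _ (.ha (.orI2 _ _)))
    exact imps_map (.ha (.efq _))
      (imps_mp (imps_map h.dual_imp_neg (imps_hyp (by simp))) (imps_hyp (by simp)))

end

/-- soundness of the Friedman A-translation for `HA + Σ_k-LEM`:
if `HA + Σ_k-LEM ⊢ φ` then `HA^* + Σ_k-LEM ⊢ φ^*`. -/
theorem aTr_sound (k : ℕ) (φ : Formula) (hφ : φ.noDollar)
    (h : Proves (sigLEM k) φ) : Proves (sigLEM k) φ.aTr := by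
  clear hφ
  induction h with
  | ax h =>
    obtain ⟨ψ, hψ, rfl⟩ := h
    exact hψ.aTrIff.aTr_or_neg (.ax ⟨ψ, hψ, rfl⟩)
  | ha h => exact aTr_of_HAAx h
  | mp _ _ ih₁ ih₂ => exact .mp ih₁ ih₂
  | gen _ ih => exact .gen ih

end SemiClassicalArith
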